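/- arXiv:2208.10037 — 4 statements merged into one kernel-verified Lean document; each statement's English description precedes it below -/
import Mathlib

section
/- For every integer a ≥ 2, the ℚ-linear map f_a : V_a → V_{a+1} defined on basis vectors by f_a(e_{(r,s)}) = (2/(r+1))·e_{(min(r+1,s), max(r+1,s))} + (2/(s+1))·e_{(r,s+1)} is injective. -/
/-- The index set `B a = {(r,s) : 1 ≤ r ≤ s, r + s = a}`. -/
def B (a : ℕ) : Type := {p : ℕ × ℕ // 1 ≤ p.1 ∧ p.1 ≤ p.2 ∧ p.1 + p.2 = a}

/-- The ℚ-vector space `V a` of finitely supported functions `B a → ℚ`. -/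
abbrev V (a : ℕ) : Type := B a →₀ ℚ

/-- The image of the basis vector `e_{(r,s)}` under `f_a`, namely
`(2/(r+1)) • e_{(min(r+1,s), max(r+1,s))} + (2/(s+1)) • e_{(r, s+1)}`. -/
noncomputable def fAux (a : ℕ) (p : B a) : V (a + 1) :=
  Finsupp.single
    ⟨(min (p.1.1 + 1) p.1.2, max (p.1.1 + 1) p.1.2), by
      obtain ⟨⟨r, s⟩, h1, h2, h3⟩ := p
      dsimp only at *
      omega⟩ ((2 : ℚ) / (p.1.1 + 1))
  + Finsupp.single
    ⟨(p.1.1, p.1.2 + 1), by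
      obtain ⟨⟨r, s⟩, h1, h2, h3⟩ := p
      dsimp only at *
      omega⟩ ((2 : ℚ) / (p.1.2 + 1))

/-- The ℚ-linear map `f_a : V a → V (a+1)` determined on the standard basis by
`f_a(e_{(r,s)}) = (2/(r+1)) • e_{(min(r+1,s), max(r+1,s))} + (2/(s+1)) • e_{(r, s+1)}`. -/
noncomputable def f (a : ℕ) : V a →ₗ[ℚ] V (a + 1) :=
  Finsupp.lsum ℚ fun p => LinearMap.toSpanSingleton ℚ (V (a + 1)) (fAux a p)

/-! The matrix of `f a` is triangular: the coordinate of `f a (e p)` at `(r, s + 1)`, for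
`p = (r', s')`, vanishes unless `p = (r, s)` or `r' < r`, and on the diagonal it is
`2/(s+1)` (plus `2/(r+1)` if `r = s`), which is positive. Hence a vector in the kernel has all
coordinates zero, by strong induction on `r`. -/

theorem LinearIndependent.of_triangular {ι κ R α : Type*} [Ring R] [NoZeroDivisors R]
    [LT α] [WellFoundedLT α] {v : ι → κ →₀ R} (g : ι → κ) (ρ : ι → α)
    (hdiag : ∀ i, v i (g i) ≠ 0) (htri : ∀ i j, j ≠ i → v j (g i) ≠ 0 → ρ j < ρ i) :
    LinearIndependent R v := by
  classical
  refine linearIndependent_iff.mpr fun l hl => Finsupp.ext fun i => ?_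
  induction i using (InvImage.wf ρ wellFounded_lt).induction with
  | _ i ih =>
    have hgi : (l.sum fun j c => c * v j (g i)) = 0 := by
      simpa [Finsupp.linearCombination_apply, Finsupp.sum_apply] using
        DFunLike.congr_fun hl (g i)
    rw [Finsupp.sum, Finset.sum_eq_single i] at hgi
    · exact (mul_eq_zero.mp hgi).resolve_right (hdiag i)
    · intro j _ hji
      by_cases hj : v j (g i) = 0
      · rw [hj, mul_zero]
      · rw [ih j (htri i j hji hj), Finsupp.coe_zero, Pi.zero_apply, zero_mul]
    · intro hi
      rw [Finsupp.notMem_support_iff.mp hi, zero_mul]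

theorem f_eq_linearCombination (a : ℕ) : f a = Finsupp.linearCombination ℚ (fAux a) := rfl

def B.succSnd {a : ℕ} (p : B a) : B (a + 1) :=
  ⟨(p.1.1, p.1.2 + 1), by obtain ⟨⟨r, s⟩, h1, h2, h3⟩ := p; dsimp only at *; omega⟩

theorem fAux_apply_succSnd_pos {a : ℕ} (p : B a) : 0 < fAux a p p.succSnd := by
  rw [fAux, Finsupp.add_apply]
  erw [Finsupp.single_eq_same]
  refine add_pos_of_nonneg_of_pos (Finsupp.single_nonneg.mpr ?_ _) ?_ <;> positivity

theorem fAux_apply_succSnd_eq_zero {a : ℕ} {p q : B a} (hqp : q ≠ p) (hq : p.1.1 ≤ q.1.1) :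
    fAux a q p.succSnd = 0 := by
  have hne : q.1 ≠ p.1 := fun h => hqp (Subtype.ext h)
  have hp := p.2
  have hq' := q.2
  rw [Ne, Prod.ext_iff] at hne
  rw [fAux, Finsupp.add_apply]
  erw [Finsupp.single_eq_of_ne', Finsupp.single_eq_of_ne', add_zero]
  all_goals
    intro h
    have := congrArg Subtype.val h
    simp only [B.succSnd, Prod.mk.injEq] at this
    omega

theorem f_injective_general (a : ℕ) : Function.Injective (f a) := by
  rw [f_eq_linearCombination]
  refine LinearIndependent.of_triangular B.succSnd (fun p => p.1.1)
    (fun p => (fAux_apply_succSnd_pos p).ne') fun p q hqp hq => ?_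
  by_contra! hle
  exact hq (fAux_apply_succSnd_eq_zero hqp hle)

theorem f_injective (a : ℕ) (ha : 2 ≤ a) : Function.Injective (f a) :=
  f_injective_general a
end

section
/- For every even integer a ≥ 2, the ℚ-linear map f_a : V_a → V_{a+1} defined on basis vectors by f_a(e_{(r,s)}) = (2/(r+1))·e_{(min(r+1,s), max(r+1,s))} + (2/(s+1))·e_{(r,s+1)} is bijective; in particular, in this case B_a and B_{a+1} both have cardinality a/2. -/
/-!
When `a` is even, every `(r, s) ∈ B (a+1)` has `r < s`. The image of `e_{(r,r)}` is a nonzero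
multiple of `e_{(r,r+1)}`, and for `r < s` the image of `e_{(r,s)}` is a nonzero multiple of
`e_{(r,s+1)}` plus a multiple of `e_{(r+1,s)}`, whose coordinates are closer together. By
induction on `s - r`, every basis vector of `V (a+1)` lies in the range of `f a`, so `f a` is
surjective, hence bijective since `|B a| = |B (a+1)| = a / 2`.
-/

namespace B

variable {a : ℕ}

theorem ext {p q : B a} (h : p.1.1 = q.1.1) : p = q :=
  Subtype.ext <| Prod.ext h <| by have := p.2.2.2; have := q.2.2.2; omega

variable (a) in
def equivFin : B a ≃ Fin (a / 2) where
  toFun p := ⟨p.1.1 - 1, by obtain ⟨⟨r, s⟩, h1, h2, h3⟩ := p; dsimp only; omega⟩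
  invFun k := ⟨(k.1 + 1, a - (k.1 + 1)), by have := k.2; dsimp only; omega⟩
  left_inv p := ext <| by obtain ⟨⟨r, s⟩, h1, h2, h3⟩ := p; dsimp only; omega
  right_inv k := rfl

noncomputable instance : Fintype (B a) := Fintype.ofEquiv _ (equivFin a).symm

theorem card : Nat.card (B a) = a / 2 := by
  rw [Nat.card_congr (equivFin a), Nat.card_eq_fintype_card, Fintype.card_fin]

theorem fst_lt_snd_of_even (hev : Even a) (q : B (a + 1)) : q.1.1 < q.1.2 := by
  obtain ⟨⟨r, s⟩, -, hrs, hsum⟩ := q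
  obtain ⟨m, rfl⟩ := hev
  dsimp only at *
  omega

end B

section

variable {a : ℕ}

theorem f_single (p : B a) (c : ℚ) : f a (Finsupp.single p c) = c • fAux a p := by
  simp [f]

theorem fAux_mem_range_f (p : B a) : fAux a p ∈ LinearMap.range (f a) :=
  ⟨Finsupp.single p 1, by rw [f_single, one_smul]⟩

theorem fAux_of_fst_eq_snd (p : B a) (q : B (a + 1)) (hp : p.1.1 = p.1.2) (hq : q.1.1 = p.1.1) :
    fAux a p = Finsupp.single q (4 / ((p.1.1 : ℚ) + 1)) := by
  rw [fAux, show (4 / ((p.1.1 : ℚ) + 1)) = 2 / (p.1.1 + 1) + 2 / (p.1.2 + 1) by rw [← hp]; ring,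
    Finsupp.single_add]
  congr 2 <;> exact B.ext (by dsimp only; omega)

theorem fAux_of_fst_lt_snd (p : B a) (q₁ q₂ : B (a + 1)) (hp : p.1.1 < p.1.2)
    (hq₁ : q₁.1.1 = p.1.1 + 1) (hq₂ : q₂.1.1 = p.1.1) :
    fAux a p =
      Finsupp.single q₁ (2 / ((p.1.1 : ℚ) + 1)) + Finsupp.single q₂ (2 / ((p.1.2 : ℚ) + 1)) := by
  rw [fAux]
  congr 2 <;> exact B.ext (by dsimp only; omega)

theorem single_mem_range_f (hev : Even a) (q : B (a + 1)) :
    Finsupp.single q 1 ∈ LinearMap.range (f a) := by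
  induction hd : q.1.2 - q.1.1 using Nat.strong_induction_on generalizing q with
  | _ d IH =>
  have hq := B.fst_lt_snd_of_even hev q
  obtain ⟨hr, -, hsum⟩ := q.2
  obtain ⟨t, ht⟩ : ∃ t, q.1.2 = t + 1 := ⟨q.1.2 - 1, by omega⟩
  let p : B a := ⟨(q.1.1, t), by omega, by omega, by omega⟩
  have hmem := fAux_mem_range_f p
  rcases eq_or_lt_of_le (show q.1.1 ≤ t by omega) with hrt | hrt
  · rw [fAux_of_fst_eq_snd p q hrt rfl, ← Finsupp.smul_single_one] at hmem
    exact (Submodule.smul_mem_iff _ (by positivity)).1 hmem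
  · let q₁ : B (a + 1) := ⟨(q.1.1 + 1, t), by omega, by omega, by omega⟩
    have hq₁ : Finsupp.single q₁ 1 ∈ LinearMap.range (f a) :=
      IH (t - (q.1.1 + 1)) (by omega) q₁ rfl
    rw [fAux_of_fst_lt_snd p q₁ q hrt rfl rfl, ← Finsupp.smul_single_one q₁,
      ← Finsupp.smul_single_one q,
      Submodule.add_mem_iff_right _ (Submodule.smul_mem _ _ hq₁)] at hmem
    exact (Submodule.smul_mem_iff _ (by positivity)).1 hmem

end

theorem f_bijective_of_even_general (a : ℕ) (hev : Even a) :
    Function.Bijective (f a) ∧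
      Nat.card (B a) = a / 2 ∧ Nat.card (B (a + 1)) = a / 2 := by
  have hcard : Nat.card (B (a + 1)) = a / 2 := by
    rw [B.card]
    obtain ⟨m, rfl⟩ := hev
    omega
  have hsurj : Function.Surjective (f a) := by
    rw [← LinearMap.range_eq_top, eq_top_iff, ← Finsupp.basisSingleOne.span_eq,
      Submodule.span_le]
    rintro _ ⟨q, rfl⟩
    exact single_mem_range_f hev q
  have hdim : Module.finrank ℚ (V a) = Module.finrank ℚ (V (a + 1)) := by
    simp only [Module.finrank_finsupp_self, ← Nat.card_eq_fintype_card, B.card, hcard]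
  exact ⟨⟨(LinearMap.injective_iff_surjective_of_finrank_eq_finrank hdim).2 hsurj, hsurj⟩,
    B.card, hcard⟩

theorem f_bijective_of_even (a : ℕ) (ha : 2 ≤ a) (hev : Even a) :
    Function.Bijective (f a) ∧
      Nat.card (B a) = a / 2 ∧ Nat.card (B (a + 1)) = a / 2 :=
  f_bijective_of_even_general a hev
end

section
/- Let A be a commutative ring which is a ℚ-algebra, let d : A → A be a derivation, let x ∈ A, and let m ∈ ℕ. Then the ℚ-span of {d^a(x) · d^{2m−a}(x) : 0 ≤ a ≤ 2m} equals the ℚ-span of {d^{2a}(x · d^{2m−2a}(x)) : 0 ≤ a ≤ m}. -/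
/-!
Let `V n` be the span of the products `dᵃx · dⁿ⁻ᵃx`, `a ≤ n`. Since `d` maps `V n` into
`V (n + 1)`, every `d²ᵃ(x · d²ᵐ⁻²ᵃx)` lies in `V (2m)`. For the converse, by induction on `m` it
suffices that, for even `n`, `V (n + 2)` is spanned by `d²(V n)` and `x · dⁿ⁺²x`. Writing
`uₖ = dᵏx · dⁿ⁺²⁻ᵏx`, the identity `d²(dᵏx · dⁿ⁻ᵏx) = uₖ₊₂ + 2uₖ₊₁ + uₖ` reduces this to
`u₀ + u₁ = d(x · dⁿ⁺¹x)`; and `2 x · dⁿ⁺¹x` is the derivative of the alternating sum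
`∑ⱼ (-1)ʲ dʲx · dⁿ⁻ʲx ∈ V n`, which telescopes because `n` is even.
-/

open Finset

namespace Derivation

variable {R A : Type*} [CommRing R] [CommRing A] [Algebra R A] (d : Derivation R A A) (x : A)

def iterateProdSpan (n : ℕ) : Submodule R A :=
  Submodule.span R {z : A | ∃ a, a ≤ n ∧ z = (⇑d)^[a] x * (⇑d)^[n - a] x}

theorem iterate_mul_iterate_mem_iterateProdSpan {n a : ℕ} (h : a ≤ n) :
    (⇑d)^[a] x * (⇑d)^[n - a] x ∈ d.iterateProdSpan x n :=
  Submodule.subset_span ⟨a, h, rfl⟩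

theorem apply_iterate_mul_iterate (a b : ℕ) :
    d ((⇑d)^[a] x * (⇑d)^[b] x) = (⇑d)^[a + 1] x * (⇑d)^[b] x + (⇑d)^[a] x * (⇑d)^[b + 1] x := by
  rw [leibniz, smul_eq_mul, smul_eq_mul, Function.iterate_succ_apply', Function.iterate_succ_apply',
    add_comm, mul_comm]

theorem apply_mem_iterateProdSpan_succ {n : ℕ} {z : A} (hz : z ∈ d.iterateProdSpan x n) :
    d z ∈ d.iterateProdSpan x (n + 1) := by
  suffices d.iterateProdSpan x n ≤ (d.iterateProdSpan x (n + 1)).comap d.toLinearMap from this hz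
  refine Submodule.span_le.2 ?_
  rintro _ ⟨a, ha, rfl⟩
  have h₁ := d.iterate_mul_iterate_mem_iterateProdSpan x (show a + 1 ≤ n + 1 by omega)
  have h₂ := d.iterate_mul_iterate_mem_iterateProdSpan x (show a ≤ n + 1 by omega)
  rw [Nat.add_sub_add_right] at h₁
  rw [show n + 1 - a = n - a + 1 by omega] at h₂
  change d _ ∈ d.iterateProdSpan x (n + 1)
  rw [apply_iterate_mul_iterate]
  exact add_mem h₁ h₂

theorem iterate_mem_iterateProdSpan_add {n : ℕ} {z : A} (hz : z ∈ d.iterateProdSpan x n)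
    (k : ℕ) : (⇑d)^[k] z ∈ d.iterateProdSpan x (n + k) := by
  induction k with
  | zero => exact hz
  | succ k ih =>
    rw [Function.iterate_succ_apply']
    exact d.apply_mem_iterateProdSpan_succ x ih

theorem apply_apply_mul (f g : A) :
    d (d (f * g)) = d (d f) * g + 2 * (d f * d g) + f * d (d g) := by
  simp only [leibniz, map_add, smul_eq_mul]
  ring

theorem apply_sum_neg_one_pow_smul (N : ℕ) :
    d (∑ j ∈ range (N + 1), (-1 : ℤ) ^ j • ((⇑d)^[j] x * (⇑d)^[N - j] x)) =
      (1 + (-1) ^ N : ℤ) • (x * (⇑d)^[N + 1] x) := by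
  let f : ℕ → A := fun j => (-1 : ℤ) ^ j • ((⇑d)^[j] x * (⇑d)^[N + 1 - j] x)
  calc _ = ∑ j ∈ range (N + 1), (f j - f (j + 1)) := by
        rw [map_sum]
        refine sum_congr rfl fun j hj => ?_
        have hj : j ≤ N := Nat.lt_succ_iff.1 (mem_range.1 hj)
        simp only [f]
        rw [map_zsmul, apply_iterate_mul_iterate, Nat.add_sub_add_right,
          show N + 1 - j = N - j + 1 by omega, pow_succ, mul_neg_one, neg_smul, smul_add]
        abel
    _ = _ := by
        rw [sum_range_sub']
        simp only [f, pow_zero, one_smul, Function.iterate_zero_apply, Nat.sub_zero, Nat.sub_self,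
          pow_succ, mul_neg_one, neg_smul, sub_neg_eq_add, add_smul, mul_comm x]

theorem apply_apply_iterate_mul_iterate (a b : ℕ) :
    d (d ((⇑d)^[a] x * (⇑d)^[b] x)) = (⇑d)^[a + 2] x * (⇑d)^[b] x +
      2 * ((⇑d)^[a + 1] x * (⇑d)^[b + 1] x) + (⇑d)^[a] x * (⇑d)^[b + 2] x := by
  simp only [apply_apply_mul, ← Function.iterate_succ_apply' (⇑d)]

theorem exists_mem_iterateProdSpan_apply_eq_two_nsmul {n : ℕ} (hn : Even n) :
    ∃ y ∈ d.iterateProdSpan x n, d y = 2 • (x * (⇑d)^[n + 1] x) := by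
  refine ⟨∑ j ∈ range (n + 1), (-1 : ℤ) ^ j • ((⇑d)^[j] x * (⇑d)^[n - j] x),
    sum_mem fun j hj => Submodule.smul_of_tower_mem _ _
      (d.iterate_mul_iterate_mem_iterateProdSpan x (Nat.lt_succ_iff.1 (mem_range.1 hj))), ?_⟩
  rw [apply_sum_neg_one_pow_smul, hn.neg_one_pow, two_nsmul, add_smul, one_smul]

theorem iterateProdSpan_add_two_le [Invertible (2 : R)] {n : ℕ} (hn : Even n)
    {S : Submodule R A} (hS : ∀ z ∈ d.iterateProdSpan x n, d (d z) ∈ S)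
    (h₀ : x * (⇑d)^[n + 2] x ∈ S) : d.iterateProdSpan x (n + 2) ≤ S := by
  refine Submodule.span_le.2 ?_
  rintro _ ⟨k, hk, rfl⟩
  induction k using Nat.strong_induction_on with
  | _ k ih =>
    match k with
    | 0 => exact h₀
    | 1 =>
      obtain ⟨y, hy, hdy⟩ := d.exists_mem_iterateProdSpan_apply_eq_two_nsmul x hn
      have h₀₁ : (2 : R) • (x * (⇑d)^[n + 2] x + d x * (⇑d)^[n + 1] x) ∈ S := by
        convert hS y hy using 1
        rw [hdy, map_nsmul, two_nsmul, two_smul, leibniz, smul_eq_mul, smul_eq_mul,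
          ← Function.iterate_succ_apply' (⇑d)]
        ring
      have := sub_mem (Submodule.smul_of_tower_mem S (⅟2 : R) h₀₁) h₀
      rwa [smul_smul, invOf_mul_self, one_smul, add_sub_cancel_left] at this
    | k + 2 =>
      have := hS _ (d.iterate_mul_iterate_mem_iterateProdSpan x (show k ≤ n by omega))
      rw [apply_apply_iterate_mul_iterate] at this
      have h₁ := ih (k + 1) (by omega) (by omega)
      have h₂ := ih k (by omega) (by omega)
      rw [show n + 2 - (k + 1) = n - k + 1 by omega] at h₁
      rw [show n + 2 - k = n - k + 2 by omega] at h₂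
      rw [Nat.add_sub_add_right, SetLike.mem_coe]
      convert sub_mem (sub_mem this (Submodule.smul_of_tower_mem S (2 : R) h₁)) h₂ using 1
      rw [two_smul]
      ring

def evenIterateSpan (m : ℕ) : Submodule R A :=
  Submodule.span R {z : A | ∃ a, a ≤ m ∧ z = (⇑d)^[2 * a] (x * (⇑d)^[2 * m - 2 * a] x)}

theorem evenIterateSpan_le_iterateProdSpan (m : ℕ) :
    d.evenIterateSpan x m ≤ d.iterateProdSpan x (2 * m) := by
  refine Submodule.span_le.2 ?_
  rintro _ ⟨a, ha, rfl⟩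
  have := d.iterate_mem_iterateProdSpan_add x
    (d.iterate_mul_iterate_mem_iterateProdSpan x (Nat.zero_le (2 * m - 2 * a))) (2 * a)
  rwa [Function.iterate_zero_apply, Nat.sub_zero, Nat.sub_add_cancel (by omega)] at this

theorem apply_apply_mem_evenIterateSpan_succ {m : ℕ} {z : A} (hz : z ∈ d.evenIterateSpan x m) :
    d (d z) ∈ d.evenIterateSpan x (m + 1) := by
  suffices d.evenIterateSpan x m ≤
      (d.evenIterateSpan x (m + 1)).comap (d.toLinearMap ∘ₗ d.toLinearMap) from this hz
  refine Submodule.span_le.2 ?_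
  rintro _ ⟨a, ha, rfl⟩
  refine Submodule.subset_span ⟨a + 1, by omega, ?_⟩
  rw [show 2 * (m + 1) - 2 * (a + 1) = 2 * m - 2 * a by omega, Nat.mul_succ,
    Function.iterate_succ_apply', Function.iterate_succ_apply']
  rfl

theorem iterateProdSpan_le_evenIterateSpan [Invertible (2 : R)] (m : ℕ) :
    d.iterateProdSpan x (2 * m) ≤ d.evenIterateSpan x m := by
  induction m with
  | zero =>
    refine Submodule.span_le.2 ?_
    rintro _ ⟨a, ha, rfl⟩
    exact Submodule.subset_span ⟨0, le_rfl, by rw [Nat.le_zero.1 ha]; rfl⟩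
  | succ m ih =>
    exact d.iterateProdSpan_add_two_le x (even_two_mul m)
      (fun z hz => d.apply_apply_mem_evenIterateSpan_succ x (ih hz))
      (Submodule.subset_span ⟨0, Nat.zero_le _, by rfl⟩)

end Derivation

theorem spans_eq_of_derivation_even (A : Type*) [CommRing A] [Algebra ℚ A]
    (d : Derivation ℚ A A) (x : A) (m : ℕ) :
    Submodule.span ℚ {z : A | ∃ a, a ≤ 2 * m ∧ z = (⇑d)^[a] x * (⇑d)^[2 * m - a] x} =
      Submodule.span ℚ
        {z : A | ∃ a, a ≤ m ∧ z = (⇑d)^[2 * a] (x * (⇑d)^[2 * m - 2 * a] x)} :=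
  le_antisymm (d.iterateProdSpan_le_evenIterateSpan x m) (d.evenIterateSpan_le_iterateProdSpan x m)
end

section
/- Let A be a commutative ring which is a ℚ-algebra, let d : A → A be a derivation, let x ∈ A, and let m ∈ ℕ. Then the ℚ-span of {d^a(x) · d^{2m+1−a}(x) : 0 ≤ a ≤ 2m+1} equals the ℚ-span of {d^{2a+1}(x · d^{2m−2a}(x)) : 0 ≤ a ≤ m}. -/
open Finset
section
variable {A : Type*} [CommRing A] [Algebra ℚ A]
variable (d : Derivation ℚ A A) (x : A) (m : ℕ)

lemma iter_add (n : ℕ) (u v : A) :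
    (⇑d)^[n] (u + v) = (⇑d)^[n] u + (⇑d)^[n] v := by
  induction n generalizing u v with
  | zero => rfl
  | succ n ih => simp [Function.iterate_succ_apply, map_add, ih]

lemma iter_leibniz (u v : A) (n : ℕ) :
    (⇑d)^[n] (u * v) =
      ∑ k ∈ range (n + 1), n.choose k • ((⇑d)^[k] u * (⇑d)^[n - k] v) := by
  induction n generalizing u v with
  | zero => simp
  | succ n ih =>
    rw [Function.iterate_succ_apply]
    have hd : d (u * v) = d u * v + u * d v := by
      rw [d.leibniz]; rw [smul_eq_mul, smul_eq_mul]; ring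
    rw [hd, iter_add, ih, ih]
    set T : ℕ → A := fun k => (⇑d)^[k] u * (⇑d)^[n + 1 - k] v with hT
    have h1 : ∑ k ∈ range (n + 1), n.choose k • ((⇑d)^[k] (d u) * (⇑d)^[n - k] v)
        = ∑ k ∈ range (n + 1), n.choose k • T (k + 1) := by
      refine sum_congr rfl fun k hk => ?_
      rw [mem_range] at hk
      have hnk : n + 1 - (k + 1) = n - k := by omega
      simp only [hT, hnk, ← Function.iterate_succ_apply]
    have h2 : ∑ k ∈ range (n + 1), n.choose k • ((⇑d)^[k] u * (⇑d)^[n - k] (d v))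
        = ∑ k ∈ range (n + 1), n.choose k • T k := by
      refine sum_congr rfl fun k hk => ?_
      rw [mem_range] at hk
      have hnk : n + 1 - k = (n - k) + 1 := by omega
      simp only [hT, hnk, Function.iterate_succ_apply]
    rw [h1, h2]
    have h3 : ∑ k ∈ range (n + 1), n.choose k • T k
        = ∑ k ∈ range n, n.choose (k + 1) • T (k + 1) + T 0 := by
      rw [sum_range_succ' (fun k => n.choose k • T k) n]
      simp
    have h4 : ∑ k ∈ range n, n.choose (k + 1) • T (k + 1)
        = ∑ k ∈ range (n + 1), n.choose (k + 1) • T (k + 1) := by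
      rw [sum_range_succ]
      simp [Nat.choose_succ_self]
    have h5 : ∑ k ∈ range (n + 2), (n + 1).choose k • T k
        = ∑ k ∈ range (n + 1), (n + 1).choose (k + 1) • T (k + 1) + T 0 := by
      rw [sum_range_succ' (fun k => (n + 1).choose k • T k) (n + 1)]
      simp
    rw [h3, h4, h5, ← add_assoc, ← sum_add_distrib]
    refine congrArg₂ (· + ·) (sum_congr rfl fun k hk => ?_) rfl
    rw [Nat.choose_succ_succ, add_smul]

/-- v-family -/
lemma d_mul (u v : A) : d (u * v) = d u * v + u * d v := by
  rw [d.leibniz, smul_eq_mul, smul_eq_mul]; ring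

lemma d2_mul (u v : A) :
    (⇑d)^[2] (u * v) = (⇑d)^[2] u * v + (⇑d)^[1] u * (⇑d)^[1] v
      + (⇑d)^[1] u * (⇑d)^[1] v + u * (⇑d)^[2] v := by
  show d (d (u * v)) = _
  rw [d_mul, map_add, d_mul, d_mul]
  show _ = d (d u) * v + d u * d v + d u * d v + u * d (d v)
  ring

def Vv (k : ℕ) : A := (⇑d)^[k] x * (⇑d)^[2 * m + 1 - k] x

/-- E-family -/
def Ee (a r : ℕ) : A :=
  (⇑d)^[2 * a + 1] ((⇑d)^[m - (a + r)] x * (⇑d)^[m - (a + r) + 2 * r] x)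

lemma Vv_symm {k : ℕ} (hk : k ≤ 2 * m + 1) : Vv d x m k = Vv d x m (2 * m + 1 - k) := by
  unfold Vv
  have h : 2 * m + 1 - (2 * m + 1 - k) = k := by omega
  rw [h, mul_comm]

lemma Ee_expand {a r : ℕ} (h : a + r ≤ m) :
    Ee d x m a r =
      ∑ k ∈ range (2 * a + 2), (2 * a + 1).choose k • Vv d x m (m - (a + r) + k) := by
  unfold Ee
  rw [iter_leibniz]
  refine sum_congr rfl fun k hk => ?_
  rw [mem_range] at hk
  unfold Vv
  congr 1
  rw [← Function.iterate_add_apply, ← Function.iterate_add_apply]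
  congr 2 <;> omega

lemma Ee_top {a : ℕ} (h : a ≤ m) :
    Ee d x m a (m - a) = (⇑d)^[2 * a + 1] (x * (⇑d)^[2 * m - 2 * a] x) := by
  unfold Ee
  have h1 : m - (a + (m - a)) = 0 := by omega
  rw [h1]
  have h2 : 0 + 2 * (m - a) = 2 * m - 2 * a := by omega
  rw [h2]
  rfl

lemma step (n p q : ℕ) :
    (⇑d)^[n + 2] ((⇑d)^[p] x * (⇑d)^[q] x)
      = (⇑d)^[n] ((⇑d)^[p + 2] x * (⇑d)^[q] x)
      + (⇑d)^[n] ((⇑d)^[p + 1] x * (⇑d)^[q + 1] x)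
      + (⇑d)^[n] ((⇑d)^[p + 1] x * (⇑d)^[q + 1] x)
      + (⇑d)^[n] ((⇑d)^[p] x * (⇑d)^[q + 2] x) := by
  rw [Function.iterate_add_apply, d2_mul, iter_add, iter_add, iter_add]
  have h2 : ∀ j : ℕ, (⇑d)^[2] ((⇑d)^[j] x) = (⇑d)^[j + 2] x := by
    intro j; rw [add_comm, Function.iterate_add_apply]
  have h1 : ∀ j : ℕ, (⇑d)^[1] ((⇑d)^[j] x) = (⇑d)^[j + 1] x := by
    intro j; rw [add_comm, Function.iterate_add_apply]
  rw [h2, h2, h1, h1]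

lemma Ee_rec0 {a : ℕ} (h : a + 1 ≤ m) :
    Ee d x m (a + 1) 0
      = Ee d x m a 1 + Ee d x m a 0 + Ee d x m a 0 + Ee d x m a 1 := by
  unfold Ee
  obtain ⟨p, hp⟩ : ∃ p, m - (a + 1) = p := ⟨_, rfl⟩
  have e0 : 2 * (a + 1) + 1 = (2 * a + 1) + 2 := by ring
  have h2 : m - (a + 1 + 0) + 2 * 0 = p := by omega
  have h1 : m - (a + 1 + 0) = p := by omega
  have h4 : m - (a + 0) + 2 * 0 = p + 1 := by omega
  have h3 : m - (a + 0) = p + 1 := by omega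
  have h6 : p + 2 * 1 = p + 2 := by omega
  rw [e0, h2, h1, h4, h3, h6, step, mul_comm ((⇑d)^[p + 2] x) ((⇑d)^[p] x)]

lemma Ee_recS {a r : ℕ} (h : a + r + 2 ≤ m) :
    Ee d x m (a + 1) (r + 1)
      = Ee d x m a r + Ee d x m a (r + 1) + Ee d x m a (r + 1)
        + Ee d x m a (r + 2) := by
  unfold Ee
  obtain ⟨p, hp⟩ : ∃ p, m - (a + r + 2) = p := ⟨_, rfl⟩
  have e0 : 2 * (a + 1) + 1 = (2 * a + 1) + 2 := by ring
  have h2 : m - (a + 1 + (r + 1)) + 2 * (r + 1) = p + 2 * (r + 1) := by omega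
  have h1 : m - (a + 1 + (r + 1)) = p := by omega
  have h4 : m - (a + r) + 2 * r = p + 2 * (r + 1) := by omega
  have h3 : m - (a + r) = p + 2 := by omega
  have h6 : m - (a + (r + 1)) + 2 * (r + 1) = p + 2 * (r + 1) + 1 := by omega
  have h5 : m - (a + (r + 1)) = p + 1 := by omega
  have h8 : m - (a + (r + 2)) + 2 * (r + 2) = p + 2 * (r + 1) + 2 := by omega
  have h7 : m - (a + (r + 2)) = p := by omega
  rw [e0, h2, h1, h4, h3, h6, h5, h8, h7, step]


end

def al : ℕ → ℕ → ℚ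
  | 0, i => if i = 0 then 2 else 0
  | 1, i => if i = 0 then -2 else if i = 1 then 1 else 0
  | (r + 2), i => (if i = 0 then 0 else al (r + 1) (i - 1)) - 2 * al (r + 1) i - al r i

lemma al_zero : ∀ r : ℕ, al r 0 = 2 * (-1) ^ r := by
  intro r
  induction r using Nat.strong_induction_on with
  | _ r ih =>
    match r with
    | 0 => simp [al]
    | 1 => simp [al]
    | (r + 2) =>
      rw [al, ih (r + 1) (by omega), ih r (by omega)]
      norm_num
      ring

lemma al_gt : ∀ r i : ℕ, r < i → al r i = 0 := by
  intro r
  induction r using Nat.strong_induction_on with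
  | _ r ih =>
    match r with
    | 0 => intro i hi; simp [al]; omega
    | 1 => intro i hi; rw [al, if_neg (by omega), if_neg (by omega)]
    | (r + 2) =>
      intro i hi
      rw [al, ih (r + 1) (by omega) i (by omega), ih r (by omega) i (by omega)]
      have : ¬ (i = 0) := by omega
      rw [if_neg this, ih (r + 1) (by omega) (i - 1) (by omega)]
      ring


section
variable {A : Type*} [CommRing A] [Algebra ℚ A]
variable (d : Derivation ℚ A A) (x : A) (m : ℕ)

lemma main_id : ∀ r a : ℕ, a + r ≤ m →
    (2 : ℚ) • Ee d x m a r = ∑ i ∈ range (r + 1), al r i • Ee d x m (a + i) 0 := by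
  intro r
  induction r using Nat.strong_induction_on with
  | _ r ih =>
    match r with
    | 0 =>
      intro a ha
      simp [al, two_smul]
    | 1 =>
      intro a ha
      simp only [Finset.sum_range_succ, Finset.sum_range_zero, Nat.add_zero]
      rw [Ee_rec0 d x m (show a + 1 ≤ m by omega)]
      rw [show al 1 0 = -2 by simp [al], show al 1 1 = 1 by simp [al]]
      module
    | (r + 2) =>
      intro a ha
      have hrec := Ee_recS d x m (show a + r + 2 ≤ m by omega)
      have IH1 := ih (r + 1) (by omega) (a + 1) (by omega)
      have IH2 := ih (r + 1) (by omega) a (by omega)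
      have IH3 := ih r (by omega) a (by omega)
      have IH1' : (2 : ℚ) • Ee d x m (a + 1) (r + 1)
          = ∑ i ∈ range (r + 2), al (r + 1) i • Ee d x m (a + (i + 1)) 0 := by
        rw [IH1]
        exact Finset.sum_congr rfl fun i _ => by rw [show a + 1 + i = a + (i + 1) by omega]
      -- rewrite the target sum
      have hA : ∑ i ∈ range (r + 3), al (r + 2) i • Ee d x m (a + i) 0
          = (∑ i ∈ range (r + 3),
              (if i = 0 then 0 else al (r + 1) (i - 1)) • Ee d x m (a + i) 0)
            - (2 : ℚ) • (∑ i ∈ range (r + 3), al (r + 1) i • Ee d x m (a + i) 0)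
            - ∑ i ∈ range (r + 3), al r i • Ee d x m (a + i) 0 := by
        rw [Finset.smul_sum, ← Finset.sum_sub_distrib, ← Finset.sum_sub_distrib]
        refine Finset.sum_congr rfl fun i _ => ?_
        rw [al, sub_smul, sub_smul, smul_smul]
      have hB : ∑ i ∈ range (r + 3),
            (if i = 0 then 0 else al (r + 1) (i - 1)) • Ee d x m (a + i) 0
          = ∑ i ∈ range (r + 2), al (r + 1) i • Ee d x m (a + (i + 1)) 0 := by
        rw [Finset.sum_range_succ'
          (fun i => (if i = 0 then 0 else al (r + 1) (i - 1)) • Ee d x m (a + i) 0) (r + 2)]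
        simp
      have hC : ∑ i ∈ range (r + 3), al (r + 1) i • Ee d x m (a + i) 0
          = ∑ i ∈ range (r + 2), al (r + 1) i • Ee d x m (a + i) 0 := by
        rw [Finset.sum_range_succ, al_gt (r + 1) (r + 2) (by omega)]
        simp
      have hD : ∑ i ∈ range (r + 3), al r i • Ee d x m (a + i) 0
          = ∑ i ∈ range (r + 1), al r i • Ee d x m (a + i) 0 := by
        rw [Finset.sum_range_succ, Finset.sum_range_succ,
          al_gt r (r + 2) (by omega), al_gt r (r + 1) (by omega)]
        simp
      rw [hA, hB, hC, hD, ← IH1', ← IH2, ← IH3, hrec]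
      module


lemma Vv_mem_S {k : ℕ} (hk : k ≤ 2 * m + 1) :
    Vv d x m k ∈ Submodule.span ℚ
      {z : A | ∃ a, a ≤ 2 * m + 1 ∧ z = (⇑d)^[a] x * (⇑d)^[2 * m + 1 - a] x} :=
  Submodule.subset_span ⟨k, hk, rfl⟩

lemma Ee_mem_S {a r : ℕ} (h : a + r ≤ m) :
    Ee d x m a r ∈ Submodule.span ℚ
      {z : A | ∃ a, a ≤ 2 * m + 1 ∧ z = (⇑d)^[a] x * (⇑d)^[2 * m + 1 - a] x} := by
  rw [Ee_expand d x m h]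
  refine Submodule.sum_mem _ fun k hk => ?_
  rw [mem_range] at hk
  rw [← Nat.cast_smul_eq_nsmul ℚ]
  exact Submodule.smul_mem _ _ (Vv_mem_S d x m (by omega))

lemma g_mem_T : ∀ k a : ℕ, a + k = m →
    Ee d x m a 0 ∈ Submodule.span ℚ
      {z : A | ∃ a, a ≤ m ∧ z = (⇑d)^[2 * a + 1] (x * (⇑d)^[2 * m - 2 * a] x)} := by
  intro k
  induction k using Nat.strong_induction_on with
  | _ k ih =>
    intro a hak
    set T := Submodule.span ℚ
      {z : A | ∃ a, a ≤ m ∧ z = (⇑d)^[2 * a + 1] (x * (⇑d)^[2 * m - 2 * a] x)} with hT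
    have hid := main_id d x m k a (by omega)
    rw [Finset.sum_range_succ'] at hid
    simp only [Nat.add_zero] at hid
    have hEk : Ee d x m a k ∈ T := by
      have : k = m - a := by omega
      rw [this, Ee_top d x m (show a ≤ m by omega)]
      exact Submodule.subset_span ⟨a, by omega, rfl⟩
    have hsum : ∑ i ∈ range k, al k (i + 1) • Ee d x m (a + (i + 1)) 0 ∈ T := by
      refine Submodule.sum_mem _ fun i hi => ?_
      rw [mem_range] at hi
      exact Submodule.smul_mem _ _ (ih (k - (i + 1)) (by omega) (a + (i + 1)) (by omega))
    have hmem : al k 0 • Ee d x m a 0 ∈ T := by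
      have heq : al k 0 • Ee d x m a 0
          = (2 : ℚ) • Ee d x m a k
            - ∑ i ∈ range k, al k (i + 1) • Ee d x m (a + (i + 1)) 0 := by
        rw [hid]; abel
      rw [heq]
      exact Submodule.sub_mem _ (Submodule.smul_mem _ _ hEk) hsum
    have hne : al k 0 ≠ 0 := by
      rw [al_zero]
      exact mul_ne_zero two_ne_zero (pow_ne_zero _ (by norm_num))
    have := Submodule.smul_mem T (al k 0)⁻¹ hmem
    rwa [inv_smul_smul₀ hne] at this


lemma v_mem_G : ∀ j : ℕ, j ≤ m →
    Vv d x m (m - j) ∈ Submodule.span ℚ {z : A | ∃ jj, jj ≤ m ∧ z = Ee d x m jj 0} := by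
  intro j
  induction j using Nat.strong_induction_on with
  | _ j ih =>
    intro hj
    set G := Submodule.span ℚ {z : A | ∃ jj, jj ≤ m ∧ z = Ee d x m jj 0} with hG
    have hexp := Ee_expand d x m (show j + 0 ≤ m by omega)
    simp only [Nat.add_zero] at hexp
    rw [Finset.sum_range_succ, Finset.sum_range_succ'] at hexp
    simp only [Nat.choose_zero_right, Nat.choose_self, one_smul, Nat.add_zero] at hexp
    have hVtop : Vv d x m (m - j + (2 * j + 1)) = Vv d x m (m - j) := by
      rw [show m - j + (2 * j + 1) = m + j + 1 by omega,
        Vv_symm d x m (show m + j + 1 ≤ 2 * m + 1 by omega),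
        show 2 * m + 1 - (m + j + 1) = m - j by omega]
    rw [hVtop] at hexp
    have hsum : ∑ k ∈ range (2 * j),
        (2 * j + 1).choose (k + 1) • Vv d x m (m - j + (k + 1)) ∈ G := by
      refine Submodule.sum_mem _ fun k hk => ?_
      rw [mem_range] at hk
      rw [← Nat.cast_smul_eq_nsmul ℚ]
      refine Submodule.smul_mem _ _ ?_
      by_cases hc : k + 1 ≤ j
      · rw [show m - j + (k + 1) = m - (j - (k + 1)) by omega]
        exact ih (j - (k + 1)) (by omega) (by omega)
      · rw [Vv_symm d x m (show m - j + (k + 1) ≤ 2 * m + 1 by omega),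
          show 2 * m + 1 - (m - j + (k + 1)) = m - (k - j) by omega]
        exact ih (k - j) (by omega) (by omega)
    have hEe : Ee d x m j 0 ∈ G := Submodule.subset_span ⟨j, hj, rfl⟩
    have h2 : Vv d x m (m - j) = (2 : ℚ)⁻¹ • (Ee d x m j 0
        - ∑ k ∈ range (2 * j),
            (2 * j + 1).choose (k + 1) • Vv d x m (m - j + (k + 1))) := by
      rw [hexp]
      module
    rw [h2]
    exact Submodule.smul_mem _ _ (Submodule.sub_mem _ hEe hsum)

end

theorem spans_eq_of_derivation_odd (A : Type*) [CommRing A] [Algebra ℚ A]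
    (d : Derivation ℚ A A) (x : A) (m : ℕ) :
    Submodule.span ℚ
        {z : A | ∃ a, a ≤ 2 * m + 1 ∧ z = (⇑d)^[a] x * (⇑d)^[2 * m + 1 - a] x} =
      Submodule.span ℚ
        {z : A | ∃ a, a ≤ m ∧ z = (⇑d)^[2 * a + 1] (x * (⇑d)^[2 * m - 2 * a] x)} := by
  apply le_antisymm
  · rw [Submodule.span_le]
    rintro z ⟨k, hk, rfl⟩
    have key : ∀ i : ℕ, i ≤ m → Vv d x m (m - i) ∈ Submodule.span ℚ
        {z : A | ∃ a, a ≤ m ∧ z = (⇑d)^[2 * a + 1] (x * (⇑d)^[2 * m - 2 * a] x)} := by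
      intro i hi
      have h1 := v_mem_G d x m i hi
      have h2 : Submodule.span ℚ {z : A | ∃ jj, jj ≤ m ∧ z = Ee d x m jj 0}
          ≤ Submodule.span ℚ
            {z : A | ∃ a, a ≤ m ∧ z = (⇑d)^[2 * a + 1] (x * (⇑d)^[2 * m - 2 * a] x)} := by
        rw [Submodule.span_le]
        rintro w ⟨jj, hjj, rfl⟩
        exact g_mem_T d x m (m - jj) jj (by omega)
      exact h2 h1
    show Vv d x m k ∈ _
    by_cases hk' : k ≤ m
    · have := key (m - k) (by omega)
      rwa [show m - (m - k) = k by omega] at this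
    · rw [Vv_symm d x m hk]
      have := key (k - m - 1) (by omega)
      rwa [show m - (k - m - 1) = 2 * m + 1 - k by omega] at this
  · rw [Submodule.span_le]
    rintro z ⟨a, ha, rfl⟩
    have h := Ee_mem_S d x m (show a + (m - a) ≤ m by omega)
    rwa [Ee_top d x m ha] at h
end
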